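/- arXiv:2106.07668 — 6 statements merged into one kernel-verified Lean document; each statement's English description precedes it below -/
import Mathlib

section
/- For any Hermitian matrix X on a bipartite space, ‖X^{T_A}‖₁ = ‖X‖₁ is preserved if X is separable (a convex combination of product states ρ_A ⊗ ρ_B); in particular, for a separable density matrix ρ, the partial transpose ρ^{T_A} is positive semidefinite (Peres criterion). -/
open Kronecker
open scoped ComplexOrder
open Matrix

/-- Trace norm `‖X‖₁ = Tr √(X†X)`, as the sum of the singular values of `X`. -/
noncomputable def traceNorm {n : Type*} [Fintype n] [DecidableEq n]
    (X : Matrix n n ℂ) : ℝ :=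
  ∑ i, Real.sqrt ((Matrix.isHermitian_conjTranspose_mul_self X).eigenvalues i)

/-- Partial transpose with respect to the first tensor factor. -/
def ptA {α β : Type*} (X : Matrix (α × β) (α × β) ℂ) : Matrix (α × β) (α × β) ℂ :=
  Matrix.of fun p q => X (q.1, p.2) (p.1, q.2)

/-- A density matrix: positive semidefinite with unit trace. -/
def IsDensityMatrix {n : Type*} [Fintype n] [DecidableEq n] (ρ : Matrix n n ℂ) : Prop :=
  ρ.PosSemidef ∧ ρ.trace = 1

/-!
The partial transpose maps a product `σ ⊗ τ` to `σᵀ ⊗ τ`, which is again positive semidefinite,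
so by linearity it keeps a separable matrix positive semidefinite. On positive semidefinite
matrices the trace norm is the trace, and the partial transpose preserves the trace.
-/

section PartialTranspose

variable {α β : Type*}

lemma ptA_kronecker (M : Matrix α α ℂ) (N : Matrix β β ℂ) : ptA (M ⊗ₖ N) = Mᵀ ⊗ₖ N := by
  ext ⟨a, b⟩ ⟨c, d⟩
  simp [ptA, kroneckerMap_apply]

lemma ptA_smul (c : ℂ) (X : Matrix (α × β) (α × β) ℂ) : ptA (c • X) = c • ptA X := by
  ext
  simp [ptA]

lemma ptA_sum {ι : Type*} (s : Finset ι) (X : ι → Matrix (α × β) (α × β) ℂ) :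
    ptA (∑ i ∈ s, X i) = ∑ i ∈ s, ptA (X i) := by
  ext
  simp [ptA, Matrix.sum_apply]

lemma trace_ptA [Fintype α] [Fintype β] (X : Matrix (α × β) (α × β) ℂ) :
    (ptA X).trace = X.trace := by
  simp [Matrix.trace, ptA]

theorem posSemidef_ptA_sum_smul_kronecker [Fintype α] [Fintype β] [DecidableEq α]
    [DecidableEq β] {ι : Type*} (s : Finset ι) {p : ι → ℝ} {σ : ι → Matrix α α ℂ}
    {τ : ι → Matrix β β ℂ} (hp : ∀ i, 0 ≤ p i) (hσ : ∀ i, (σ i).PosSemidef)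
    (hτ : ∀ i, (τ i).PosSemidef) :
    (ptA (∑ i ∈ s, (p i : ℂ) • (σ i ⊗ₖ τ i))).PosSemidef := by
  simp only [ptA_sum, ptA_smul, ptA_kronecker]
  exact posSemidef_sum s fun i _ =>
    ((hσ i).transpose.kronecker (hτ i)).smul (Complex.zero_le_real.mpr (hp i))

end PartialTranspose

section TraceNorm

variable {n : Type*} [Fintype n] [DecidableEq n]

open scoped MatrixOrder in
/-- For `X ≥ 0` we have `√(XᴴX) = √(X²) = X`. -/
lemma Matrix.PosSemidef.ofReal_traceNorm {X : Matrix n n ℂ} (hX : X.PosSemidef) :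
    (traceNorm X : ℂ) = X.trace := by
  have hXX : (Xᴴ * X).PosSemidef := posSemidef_conjTranspose_mul_self X
  have hsqrt : CFC.sqrt (Xᴴ * X) = X := by
    rw [hX.1, ← pow_two]
    exact CFC.sqrt_sq X hX.nonneg
  have htrace : (CFC.sqrt (Xᴴ * X)).trace = ∑ i, (Real.sqrt (hXX.1.eigenvalues i) : ℂ) := by
    rw [CFC.sqrt_eq_real_sqrt _ hXX.nonneg, cfcₙ_eq_cfc (hf0 := Real.sqrt_zero),
      hXX.1.cfc_eq, IsHermitian.cfc, Unitary.conjStarAlgAut_apply, trace_mul_cycle]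
    simp [Function.comp]
  rw [hsqrt] at htrace
  rw [htrace, traceNorm, Complex.ofReal_sum]

theorem traceNorm_ptA_of_posSemidef {α β : Type*} [Fintype α] [Fintype β] [DecidableEq α]
    [DecidableEq β] {X : Matrix (α × β) (α × β) ℂ} (hX : X.PosSemidef)
    (hXpt : (ptA X).PosSemidef) : traceNorm (ptA X) = traceNorm X := by
  exact_mod_cast hXpt.ofReal_traceNorm.trans ((trace_ptA X).trans hX.ofReal_traceNorm.symm)

end TraceNorm

theorem stmt_4 {A B : Type*} [Fintype A] [Fintype B] [DecidableEq A] [DecidableEq B]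
    (ρ : Matrix (A × B) (A × B) ℂ) (hρ : IsDensityMatrix ρ)
    (hsep : ∃ (k : ℕ) (p : Fin k → ℝ) (σ : Fin k → Matrix A A ℂ)
        (τ : Fin k → Matrix B B ℂ),
      (∀ i, 0 ≤ p i) ∧ (∑ i, p i) = 1 ∧
      (∀ i, IsDensityMatrix (σ i)) ∧ (∀ i, IsDensityMatrix (τ i)) ∧
      ρ = ∑ i, (p i : ℂ) • (σ i ⊗ₖ τ i)) :
    traceNorm (ptA ρ) = traceNorm ρ ∧ (ptA ρ).PosSemidef := by
  obtain ⟨k, p, σ, τ, hp, -, hσ, hτ, rfl⟩ := hsep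
  have hpt := posSemidef_ptA_sum_smul_kronecker Finset.univ hp (fun i => (hσ i).1)
    (fun i => (hτ i).1)
  exact ⟨traceNorm_ptA_of_posSemidef hρ.1 hpt, hpt⟩
end

section
/- If a tripartite pure state factorizes as |Ψ_ABC⟩ = |Ψ_{AB_L}⟩ ⊗ |Ψ_{B_RC}⟩ under a decomposition H_B = H_{B_L} ⊗ H_{B_R}, then the entanglement negativity satisfies E_{A:BC}(|Ψ⟩⟨Ψ|) = E_{A:B}(Tr_C |Ψ⟩⟨Ψ|). -/
/-- Partial trace over the last tensor factor `C`. -/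
noncomputable def traceOutC {α β γ : Type*} [Fintype γ]
    (X : Matrix (α × β × γ) (α × β × γ) ℂ) : Matrix (α × β) (α × β) ℂ :=
  Matrix.of fun p q => ∑ c, X (p.1, p.2, c) (q.1, q.2, c)

/-- The entanglement negativity `E_{A:rest} = log ‖ρ^{T_A}‖₁`. -/
noncomputable def negE {α β : Type*} [Fintype α] [Fintype β] [DecidableEq α] [DecidableEq β]
    (ρ : Matrix (α × β) (α × β) ℂ) : ℝ :=
  Real.log (traceNorm (ptA ρ))

/-
Up to a reordering of indices, both partial transposes are Kronecker products `T ⊗ₖ Q`, where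
`T` is the partial transpose of `|Ψ₁⟩⟨Ψ₁|` and `Q` is either `|Ψ₂⟩⟨Ψ₂|` or its partial trace over
`C`. The trace norm is multiplicative on Kronecker products (the singular values of `T ⊗ₖ Q` are
the products of those of `T` and `Q`) and equals the trace on positive semidefinite matrices, and
both choices of `Q` have trace `‖Ψ₂‖²`. Hence both trace norms equal `‖T‖₁ ‖Ψ₂‖²`.
-/

section TraceNorm

open Matrix Polynomial Kronecker ComplexOrder

theorem traceNorm_eq_sum_sqrt_of_charpoly_eq {m n : Type*} [Fintype m] [Fintype n]
    [DecidableEq n] (X : Matrix n n ℂ) (d : m → ℝ)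
    (h : (Xᴴ * X).charpoly = ∏ j, (Polynomial.X - C (d j : ℂ))) :
    traceNorm X = ∑ j, √(d j) := by
  set E := (isHermitian_conjTranspose_mul_self X).eigenvalues
  have hroots := (isHermitian_conjTranspose_mul_self X).roots_charpoly_eq_eigenvalues
  rw [h, roots_prod _ _ (by simp [Finset.prod_ne_zero_iff, X_sub_C_ne_zero])] at hroots
  simp only [roots_X_sub_C, Multiset.bind_singleton] at hroots
  have heig := Multiset.map_injective Complex.ofReal_injective (a₁ := Finset.univ.val.map d)
    (a₂ := Finset.univ.val.map E) (by simpa [Multiset.map_map, Function.comp_def] using hroots)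
  rw [traceNorm, Finset.sum_eq_multiset_sum, Finset.sum_eq_multiset_sum]
  change (Finset.univ.val.map (Real.sqrt ∘ E)).sum = (Finset.univ.val.map (Real.sqrt ∘ d)).sum
  rw [← Multiset.map_map, ← Multiset.map_map, heig]

variable {m n : Type*} [Fintype m] [DecidableEq m] [Fintype n] [DecidableEq n]

theorem traceNorm_submatrix_equiv (X : Matrix n n ℂ) (e : m ≃ n) :
    traceNorm (X.submatrix e e) = traceNorm X := by
  rw [traceNorm]
  apply traceNorm_eq_sum_sqrt_of_charpoly_eq
  rw [conjTranspose_submatrix, submatrix_mul_equiv, ← e.symm_symm, ← reindex_apply,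
    charpoly_reindex, (isHermitian_conjTranspose_mul_self X).charpoly_eq]
  rfl

theorem Matrix.IsHermitian.charpoly_kronecker {A : Matrix m m ℂ} {B : Matrix n n ℂ}
    (hA : A.IsHermitian) (hB : B.IsHermitian) :
    (A ⊗ₖ B).charpoly =
      ∏ p : m × n, (X - C ((hA.eigenvalues p.1 * hB.eigenvalues p.2 : ℝ) : ℂ)) := by
  have hU := mem_unitaryGroup_iff'.mp hA.eigenvectorUnitary.2
  have hV := mem_unitaryGroup_iff'.mp hB.eigenvectorUnitary.2
  conv_lhs => rw [hA.spectral_theorem, hB.spectral_theorem, Unitary.conjStarAlgAut_apply,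
    Unitary.conjStarAlgAut_apply]
  rw [mul_kronecker_mul, mul_kronecker_mul, charpoly_mul_comm, ← mul_assoc, ← mul_kronecker_mul,
    hU, hV, one_kronecker_one, one_mul, diagonal_kronecker_diagonal, charpoly_diagonal]
  simp

theorem traceNorm_kronecker (P : Matrix m m ℂ) (Q : Matrix n n ℂ) :
    traceNorm (P ⊗ₖ Q) = traceNorm P * traceNorm Q := by
  have hP := posSemidef_conjTranspose_mul_self P
  have hQ := posSemidef_conjTranspose_mul_self Q
  have h := hP.isHermitian.charpoly_kronecker hQ.isHermitian
  rw [mul_kronecker_mul, ← conjTranspose_kronecker] at h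
  rw [traceNorm_eq_sum_sqrt_of_charpoly_eq _ _ h, traceNorm, traceNorm,
    Finset.sum_mul_sum, ← Finset.sum_product']
  exact Finset.sum_congr rfl fun p _ => Real.sqrt_mul (hP.eigenvalues_nonneg p.1) _

theorem Matrix.IsHermitian.traceNorm_eq_sum_abs_eigenvalues {A : Matrix n n ℂ}
    (hA : A.IsHermitian) :
    traceNorm A = ∑ i, |hA.eigenvalues i| := by
  have h := hA.charpoly_cfc_eq (fun x : ℝ => x ^ 2)
  have hsq : A * A = Aᴴ * A := by rw [hA.eq]
  rw [cfc_pow_id A 2 hA.isSelfAdjoint, sq, hsq] at h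
  rw [traceNorm_eq_sum_sqrt_of_charpoly_eq _ _ h]
  simp only [Algebra.algebraMap_self, RingHom.id_apply, Real.sqrt_sq_eq_abs]

theorem Matrix.PosSemidef.traceNorm_eq_re_trace {A : Matrix n n ℂ} (hA : A.PosSemidef) :
    traceNorm A = A.trace.re := by
  rw [hA.isHermitian.traceNorm_eq_sum_abs_eigenvalues, hA.isHermitian.trace_eq_sum_eigenvalues]
  simp [abs_of_nonneg (hA.eigenvalues_nonneg _)]

end TraceNorm

open Matrix Kronecker ComplexOrder in
theorem stmt_5_general {A BL BR C : Type*} [Fintype A] [Fintype BL] [Fintype BR] [Fintype C]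
    [DecidableEq A] [DecidableEq BL] [DecidableEq BR] [DecidableEq C]
    (Ψ₁ : A × BL → ℂ) (Ψ₂ : BR × C → ℂ)
    (Ψ : A × (BL × BR) × C → ℂ)
    (hΨ : ∀ a bl br c, Ψ (a, (bl, br), c) = Ψ₁ (a, bl) * Ψ₂ (br, c))
    (ρ : Matrix (A × (BL × BR) × C) (A × (BL × BR) × C) ℂ)
    (hρ : ∀ p q, ρ p q = Ψ p * star (Ψ q)) :
    negE ρ = negE (traceOutC ρ) := by
  set T := ptA (vecMulVec Ψ₁ (star Ψ₁))
  set N : Matrix BR C ℂ := Matrix.of fun b c => Ψ₂ (b, c)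
  have hσ := posSemidef_vecMulVec_self_star Ψ₂
  have hG := posSemidef_self_mul_conjTranspose N
  set e₁ : A × (BL × BR) × C ≃ (A × BL) × (BR × C) :=
    ⟨fun x => ((x.1, x.2.1.1), (x.2.1.2, x.2.2)), fun y => (y.1.1, (y.1.2, y.2.1), y.2.2),
      fun _ => rfl, fun _ => rfl⟩
  set e₂ : A × (BL × BR) ≃ (A × BL) × BR :=
    ⟨fun x => ((x.1, x.2.1), x.2.2), fun y => (y.1.1, (y.1.2, y.2)), fun _ => rfl, fun _ => rfl⟩
  have hptA : ptA ρ = (T ⊗ₖ vecMulVec Ψ₂ (star Ψ₂)).submatrix e₁ e₁ := by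
    ext ⟨a, ⟨bl, br⟩, c⟩ ⟨a', ⟨bl', br'⟩, c'⟩
    simp only [ptA, hρ, hΨ, star_mul', of_apply, vecMulVec_apply, Pi.star_apply, Equiv.coe_fn_mk,
      submatrix_apply, kroneckerMap_apply, T, e₁]
    ring
  have hptA_traceOutC : ptA (traceOutC ρ) = (T ⊗ₖ (N * Nᴴ)).submatrix e₂ e₂ := by
    ext ⟨a, bl, br⟩ ⟨a', bl', br'⟩
    simp only [ptA, traceOutC, hρ, hΨ, star_mul', of_apply, vecMulVec_apply, Pi.star_apply,
      Equiv.coe_fn_mk, submatrix_apply, kroneckerMap_apply, mul_apply, conjTranspose_apply,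
      Finset.mul_sum, T, N, e₂]
    exact Finset.sum_congr rfl fun _ _ => by ring
  have htrace : (vecMulVec Ψ₂ (star Ψ₂)).trace = (N * Nᴴ).trace := by
    simp [N, trace, vecMulVec_apply, mul_apply, Fintype.sum_prod_type]
  rw [negE, negE, hptA, hptA_traceOutC, traceNorm_submatrix_equiv, traceNorm_submatrix_equiv,
    traceNorm_kronecker, traceNorm_kronecker, hσ.traceNorm_eq_re_trace, hG.traceNorm_eq_re_trace,
    htrace]

theorem stmt_5 {A BL BR C : Type*} [Fintype A] [Fintype BL] [Fintype BR] [Fintype C]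
    [DecidableEq A] [DecidableEq BL] [DecidableEq BR] [DecidableEq C]
    (Ψ₁ : A × BL → ℂ) (Ψ₂ : BR × C → ℂ)
    (h₁ : ∑ p, ‖Ψ₁ p‖ ^ 2 = 1) (h₂ : ∑ p, ‖Ψ₂ p‖ ^ 2 = 1)
    (Ψ : A × (BL × BR) × C → ℂ)
    (hΨ : ∀ a bl br c, Ψ (a, (bl, br), c) = Ψ₁ (a, bl) * Ψ₂ (br, c))
    (ρ : Matrix (A × (BL × BR) × C) (A × (BL × BR) × C) ℂ)
    (hρ : ∀ p q, ρ p q = Ψ p * star (Ψ q)) :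
    negE ρ = negE (traceOutC ρ) :=
  stmt_5_general Ψ₁ Ψ₂ Ψ hΨ ρ hρ
end

section
/- Let ρ = (1/2^{n}) Σ_{γ,γ' ∈ {0,1}^n, Σγ ≡ Σγ' (mod 2)} |γ⟩⟨γ'| on (ℂ²)^{⊗n} (n ≥ 2), the parity-block maximally coherent mixed state. Then tracing out all qubits except the first and last gives (1/4) Σ_{γ_1+γ_n ≡ γ'_1+γ'_n (mod 2)} |γ_1 γ_n⟩⟨γ'_1 γ'_n|, which is not equal to the tensor product of its marginals (each marginal being the maximally mixed single-qubit state I/2). -/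
/-- Extend a configuration of the first and last qubits by a configuration `β` of the
remaining (middle) qubits. -/
def embCfg {n : ℕ} (i₀ iₙ : Fin n) (g1 gn : ZMod 2)
    (β : {i : Fin n // i ≠ i₀ ∧ i ≠ iₙ} → ZMod 2) : Fin n → ZMod 2 :=
  fun i => if h0 : i = i₀ then g1 else if hl : i = iₙ then gn else β ⟨i, ⟨h0, hl⟩⟩

/-- For the parity-block maximally coherent mixed state `ρ` on `n` qubits, tracing
out all qubits except the first and last gives
`(1/4) Σ_{γ₁+γₙ ≡ γ₁'+γₙ'} |γ₁γₙ⟩⟨γ₁'γₙ'|`; its single-qubit marginals are both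
maximally mixed (`I/2`), yet the two-qubit state is not the product of its marginals. -/
theorem stmt_9 (n : ℕ) (hn : 2 ≤ n)
    (ρ : Matrix (Fin n → ZMod 2) (Fin n → ZMod 2) ℂ)
    (hρ : ∀ γ γ', ρ γ γ' = if (∑ i, γ i) = (∑ i, γ' i) then (((2 : ℂ) ^ n)⁻¹) else 0)
    (i₀ iₙ : Fin n) (h0 : (i₀ : ℕ) = 0) (hl : (iₙ : ℕ) = n - 1)
    (σ : Matrix (ZMod 2 × ZMod 2) (ZMod 2 × ZMod 2) ℂ)
    (hσ : ∀ g1 gn g1' gn', σ (g1, gn) (g1', gn')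
      = ∑ β : {i : Fin n // i ≠ i₀ ∧ i ≠ iₙ} → ZMod 2,
          ρ (embCfg i₀ iₙ g1 gn β) (embCfg i₀ iₙ g1' gn' β)) :
    (∀ g1 gn g1' gn', σ (g1, gn) (g1', gn')
        = if g1 + gn = g1' + gn' then (1 / 4 : ℂ) else 0) ∧
    (∀ g g' : ZMod 2, (∑ h, σ (g, h) (g', h)) = if g = g' then (1 / 2 : ℂ) else 0) ∧
    (∀ g g' : ZMod 2, (∑ h, σ (h, g) (h, g')) = if g = g' then (1 / 2 : ℂ) else 0) ∧
    σ ≠ Matrix.of (fun p q =>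
      (∑ h, σ (p.1, h) (q.1, h)) * (∑ h, σ (h, p.2) (h, q.2))) := by
  have hi : i₀ ≠ iₙ := by
    intro h
    have : (i₀ : ℕ) = (iₙ : ℕ) := by rw [h]
    omega
  -- sum formula
  have hsum : ∀ (g1 gn : ZMod 2) (β : {i : Fin n // i ≠ i₀ ∧ i ≠ iₙ} → ZMod 2),
      (∑ i, embCfg i₀ iₙ g1 gn β i)
        = g1 + gn + ∑ j : {i : Fin n // i ≠ i₀ ∧ i ≠ iₙ}, β j := by
    intro g1 gn β
    have hsub : ({i₀, iₙ} : Finset (Fin n)) ⊆ Finset.univ := Finset.subset_univ _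
    rw [← Finset.sum_sdiff hsub]
    have h1 : ∑ i ∈ ({i₀, iₙ} : Finset (Fin n)), embCfg i₀ iₙ g1 gn β i = g1 + gn := by
      rw [Finset.sum_pair hi]
      simp [embCfg, hi.symm]
    have h2 : ∑ i ∈ Finset.univ \ ({i₀, iₙ} : Finset (Fin n)), embCfg i₀ iₙ g1 gn β i
        = ∑ j : {i : Fin n // i ≠ i₀ ∧ i ≠ iₙ}, β j := by
      rw [Finset.sum_subtype (p := fun i : Fin n => i ≠ i₀ ∧ i ≠ iₙ)
        (Finset.univ \ ({i₀, iₙ} : Finset (Fin n)))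
        (by intro x; simp [not_or])
        (fun i => embCfg i₀ iₙ g1 gn β i)]
      refine Finset.sum_congr rfl ?_
      intro a _
      simp [embCfg, a.2.1, a.2.2]
    rw [h1, h2, add_comm]
  have hcard : Fintype.card {i : Fin n // i ≠ i₀ ∧ i ≠ iₙ} = n - 2 := by
    rw [Fintype.card_subtype]
    have : Finset.univ.filter (fun i : Fin n => i ≠ i₀ ∧ i ≠ iₙ)
        = Finset.univ \ ({i₀, iₙ} : Finset (Fin n)) := by
      ext x; simp [not_or]
    rw [this, Finset.card_sdiff_of_subset (Finset.subset_univ _)]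
    rw [Finset.card_pair hi]
    simp
  have hval : ((2 : ℂ) ^ (n - 2)) * ((2 : ℂ) ^ n)⁻¹ = 1 / 4 := by
    have h2n : (2 : ℂ) ^ n = 2 ^ (n - 2) * 2 ^ 2 := by
      rw [← pow_add]; congr 1; omega
    rw [h2n, mul_inv]
    have hne : ((2 : ℂ) ^ (n - 2)) ≠ 0 := pow_ne_zero _ two_ne_zero
    field_simp
    norm_num
  have key : ∀ g1 gn g1' gn', σ (g1, gn) (g1', gn')
      = if g1 + gn = g1' + gn' then (1 / 4 : ℂ) else 0 := by
    intro g1 gn g1' gn'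
    rw [hσ]
    have : ∀ β : {i : Fin n // i ≠ i₀ ∧ i ≠ iₙ} → ZMod 2,
        ρ (embCfg i₀ iₙ g1 gn β) (embCfg i₀ iₙ g1' gn' β)
          = if g1 + gn = g1' + gn' then ((2 : ℂ) ^ n)⁻¹ else 0 := by
      intro β
      rw [hρ, hsum, hsum]
      simp
    rw [Finset.sum_congr rfl (fun β _ => this β)]
    rw [Finset.sum_const]
    split_ifs with h
    · rw [nsmul_eq_mul]
      rw [Finset.card_univ, Fintype.card_fun, hcard, ZMod.card]
      push_cast
      rw [← hval]
    · simp
  refine ⟨key, ?_, ?_, ?_⟩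
  · intro g g'
    have : ∀ h : ZMod 2, σ (g, h) (g', h) = if g = g' then (1/4 : ℂ) else 0 := by
      intro h; rw [key]; simp
    rw [Finset.sum_congr rfl (fun h _ => this h), Finset.sum_const, Finset.card_univ, ZMod.card]
    split_ifs <;> norm_num
  · intro g g'
    have : ∀ h : ZMod 2, σ (h, g) (h, g') = if g = g' then (1/4 : ℂ) else 0 := by
      intro h; rw [key]; simp
    rw [Finset.sum_congr rfl (fun h _ => this h), Finset.sum_const, Finset.card_univ, ZMod.card]
    split_ifs <;> norm_num
  · intro heq
    have h1 := congrFun (congrFun heq ((0 : ZMod 2), (0 : ZMod 2))) ((1 : ZMod 2), (1 : ZMod 2))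
    simp only [Matrix.of_apply] at h1
    have hm : ∀ h : ZMod 2, σ (h, (0:ZMod 2)) (h, (1:ZMod 2)) = 0 := by
      intro h; rw [key, if_neg (by simp)]
    have hz : (∑ h, σ (h, (0:ZMod 2)) (h, (1:ZMod 2))) = 0 := by
      rw [Finset.sum_congr rfl (fun h _ => hm h)]; simp
    have hL : σ ((0:ZMod 2), (0:ZMod 2)) ((1:ZMod 2), (1:ZMod 2)) = 1/4 := by
      rw [key, if_pos (by decide)]
    rw [hL, hz, mul_zero] at h1
    norm_num at h1
end

section
/- For q ∈ ℂ with |q| < 1, the following product identity holds: ∏_{j≥1}(1+q^{j−1/2})²(1−q^j) = Σ_{n∈ℤ} q^{n²/2}, i.e., θ_3(τ) = ∏_{j>0}(1−q^j)(1+q^{j−1/2})² where q = e^{2πiτ}. -/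
/-!
With `q = w²`, the finite form of the Jacobi triple product at `z = 1` reads
`∏_{j<N} (1 + w^{2j+1})² = ∑_m w^{m²} [2N, N+m]_q`; it follows by induction on `N`, since
passing from `N` to `N + 1` multiplies `∑_m w^{m²} [2N, N+m]_q zᵐ` by
`(1 + w^{2N+1} z)(1 + w^{2N+1} z⁻¹)`, which is a three-term recursion for the coefficients. Multiplying by `(q;q)_N`, the coefficient of `w^{m²}` becomes
`(q;q)_{2N} (q;q)_N / ((q;q)_{N+m} (q;q)_{N-m})`. Because `(q;q)_n` converges to
`(q;q)_∞ ≠ 0`, these tend to `1` and are bounded uniformly in `N` and `m`, so dominated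
convergence turns the finite identity into the infinite one.
-/

open Finset

namespace ThetaProduct

variable {K : Type*} [Field K]

def qPochhammer (q : K) (n : ℕ) : K := ∏ i ∈ range n, (1 - q ^ (i + 1))

/-- `1 / (q;q)_k`, extended by `0` to negative `k` so that q-binomial coefficients vanish outside
their range. -/
def qPochhammerInv (q : K) (k : ℤ) : K := if k < 0 then 0 else (qPochhammer q k.toNat)⁻¹

lemma qPochhammer_succ (q : K) (n : ℕ) :
    qPochhammer q (n + 1) = qPochhammer q n * (1 - q ^ (n + 1)) :=
  prod_range_succ _ _

lemma qPochhammer_ne_zero {q : K} (hq : ∀ k : ℕ, q ^ (k + 1) ≠ 1) (n : ℕ) :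
    qPochhammer q n ≠ 0 :=
  prod_ne_zero_iff.2 fun k _ => sub_ne_zero.2 (hq k).symm

lemma qPochhammerInv_natCast (q : K) (n : ℕ) : qPochhammerInv q n = (qPochhammer q n)⁻¹ := by
  simp [qPochhammerInv]

lemma qPochhammerInv_of_neg (q : K) {k : ℤ} (hk : k < 0) : qPochhammerInv q k = 0 :=
  if_pos hk

lemma qPochhammerInv_eq_mul_succ {q : K} (hq : ∀ k : ℕ, q ^ (k + 1) ≠ 1) (k : ℤ) :
    qPochhammerInv q k = (1 - q ^ (k + 1)) * qPochhammerInv q (k + 1) := by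
  rcases lt_trichotomy (k + 1) 0 with hk | hk | hk
  · rw [qPochhammerInv_of_neg q hk, qPochhammerInv_of_neg q (by omega), mul_zero]
  · rw [qPochhammerInv_of_neg q (by omega), hk, zpow_zero, sub_self, zero_mul]
  · obtain ⟨n, rfl⟩ := Int.eq_ofNat_of_zero_le (a := k) (by omega)
    have hD := qPochhammer_ne_zero hq n
    have hn : (1 : K) - q ^ (n + 1) ≠ 0 := sub_ne_zero.2 (hq n).symm
    rw [← Nat.cast_succ, zpow_natCast, qPochhammerInv_natCast, qPochhammerInv_natCast,
      qPochhammer_succ]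
    field_simp

/-- `w^{m²}` times the Gaussian binomial coefficient `[2N, N+m]` in `q = w²`. -/
def thetaCoeff (w : K) (N : ℕ) (m : ℤ) : K :=
  w ^ (m ^ 2) * qPochhammer (w ^ 2) (2 * N) * qPochhammerInv (w ^ 2) (N + m) *
    qPochhammerInv (w ^ 2) (N - m)

lemma sq_zpow_natCast_add {w : K} (hw : w ≠ 0) (n : ℕ) (m : ℤ) :
    (w ^ 2) ^ ((n : ℤ) + m) = (w ^ 2) ^ n * (w ^ m) ^ 2 := by
  simp only [← zpow_natCast, ← zpow_mul, ← zpow_add₀ hw]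
  congr 1; ring

lemma sq_zpow_natCast_sub {w : K} (hw : w ≠ 0) (n : ℕ) (m : ℤ) :
    (w ^ 2) ^ ((n : ℤ) - m) = (w ^ 2) ^ n / (w ^ m) ^ 2 := by
  rw [eq_div_iff (by positivity)]
  simp only [← zpow_natCast, ← zpow_mul, ← zpow_add₀ hw]
  congr 1; ring

lemma zpow_sub_one_sq {w : K} (hw : w ≠ 0) (m : ℤ) :
    w ^ ((m - 1) ^ 2) = w ^ (m ^ 2) * w / (w ^ m) ^ 2 := by
  rw [eq_div_iff (by positivity), ← zpow_add_one₀ hw]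
  simp only [← zpow_natCast, ← zpow_mul, ← zpow_add₀ hw]
  congr 1; push_cast; ring

lemma zpow_add_one_sq {w : K} (hw : w ≠ 0) (m : ℤ) :
    w ^ ((m + 1) ^ 2) = w ^ (m ^ 2) * w * (w ^ m) ^ 2 := by
  rw [← zpow_add_one₀ hw]
  simp only [← zpow_natCast, ← zpow_mul, ← zpow_add₀ hw]
  congr 1; push_cast; ring

lemma thetaCoeff_succ {w : K} (hw0 : w ≠ 0) (hw : ∀ k : ℕ, (w ^ 2) ^ (k + 1) ≠ 1)
    (N : ℕ) (m : ℤ) :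
    thetaCoeff w (N + 1) m = (1 + w ^ (4 * N + 2)) * thetaCoeff w N m
      + w ^ (2 * N + 1) * (thetaCoeff w N (m - 1) + thetaCoeff w N (m + 1)) := by
  have hI := qPochhammerInv_eq_mul_succ hw
  have hD : qPochhammer (w ^ 2) (2 * (N + 1)) = qPochhammer (w ^ 2) (2 * N) *
      (1 - (w ^ 2) ^ (2 * N + 1)) * (1 - (w ^ 2) ^ (2 * N + 2)) := by
    rw [show 2 * (N + 1) = 2 * N + 1 + 1 by ring, qPochhammer_succ, qPochhammer_succ]
  have hI2 (k : ℤ) : qPochhammerInv (w ^ 2) (k - 1) =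
      (1 - (w ^ 2) ^ k) * (1 - (w ^ 2) ^ (k + 1)) * qPochhammerInv (w ^ 2) (k + 1) := by
    rw [hI, sub_add_cancel, hI, mul_assoc]
  simp only [thetaCoeff, hD]
  rw [show ((N + 1 : ℕ) : ℤ) + m = (N : ℤ) + m + 1 by push_cast; ring,
    show ((N + 1 : ℕ) : ℤ) - m = (N : ℤ) - m + 1 by push_cast; ring,
    show (N : ℤ) + (m - 1) = (N : ℤ) + m - 1 by ring,
    show (N : ℤ) - (m - 1) = (N : ℤ) - m + 1 by ring,
    show (N : ℤ) + (m + 1) = (N : ℤ) + m + 1 by ring,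
    show (N : ℤ) - (m + 1) = (N : ℤ) - m - 1 by ring,
    hI2 (N + m), hI2 (N - m), hI (N + m), hI (N - m),
    show (N : ℤ) + m + 1 = ((N + 1 : ℕ) : ℤ) + m by push_cast; ring,
    show (N : ℤ) - m + 1 = ((N + 1 : ℕ) : ℤ) - m by push_cast; ring,
    sq_zpow_natCast_add hw0, sq_zpow_natCast_add hw0, sq_zpow_natCast_sub hw0,
    sq_zpow_natCast_sub hw0, zpow_sub_one_sq hw0, zpow_add_one_sq hw0]
  field_simp
  ring

lemma thetaCoeff_eq_zero {w : K} {N : ℕ} {m : ℤ} (h : (N : ℤ) < |m|) : thetaCoeff w N m = 0 := by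
  rcases lt_abs.1 h with h | h
  · rw [thetaCoeff, qPochhammerInv_of_neg _ (by omega : (N : ℤ) - m < 0), mul_zero]
  · rw [thetaCoeff, qPochhammerInv_of_neg _ (by omega : (N : ℤ) + m < 0), mul_zero, zero_mul]

lemma hasFiniteSupport_thetaCoeff (w : K) (N : ℕ) : (thetaCoeff w N).HasFiniteSupport := by
  refine (Set.finite_Icc (-(N : ℤ)) N).subset fun m hm => ?_
  by_contra h
  exact hm (thetaCoeff_eq_zero (lt_abs.2 (by simp only [Set.mem_Icc] at h; omega)))

lemma prod_one_add_sq_eq_finsum_thetaCoeff {w : K} (hw0 : w ≠ 0)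
    (hw : ∀ k : ℕ, (w ^ 2) ^ (k + 1) ≠ 1) (N : ℕ) :
    ∏ j ∈ range N, (1 + w ^ (2 * j + 1)) ^ 2 = ∑ᶠ m, thetaCoeff w N m := by
  induction N with
  | zero =>
    rw [prod_range_zero, finsum_eq_single _ 0 fun m hm => thetaCoeff_eq_zero (by positivity)]
    simp [thetaCoeff, qPochhammerInv, qPochhammer]
  | succ N ih =>
    have hc := hasFiniteSupport_thetaCoeff w N
    have hcPred : (fun m => thetaCoeff w N (m - 1)).HasFiniteSupport :=
      hc.fun_comp_of_injective sub_left_injective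
    have hcSucc : (fun m => thetaCoeff w N (m + 1)).HasFiniteSupport :=
      hc.fun_comp_of_injective (add_left_injective 1)
    have hsumPred : ∑ᶠ m, thetaCoeff w N (m - 1) = ∑ᶠ m, thetaCoeff w N m :=
      finsum_comp_equiv (Equiv.subRight 1)
    have hsumSucc : ∑ᶠ m, thetaCoeff w N (m + 1) = ∑ᶠ m, thetaCoeff w N m :=
      finsum_comp_equiv (Equiv.addRight 1)
    simp only [thetaCoeff_succ hw0 hw N]
    rw [finsum_add_distrib (by fun_prop) (by fun_prop), ← mul_finsum, ← mul_finsum,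
      finsum_add_distrib hcPred hcSucc, prod_range_succ, ih,
      hsumPred, hsumSucc]
    ring

lemma prod_range_eq_finsum_qPochhammer_mul_thetaCoeff {w : K} (hw0 : w ≠ 0)
    (hw : ∀ k : ℕ, (w ^ 2) ^ (k + 1) ≠ 1) (N : ℕ) :
    ∏ j ∈ range N, (1 + w ^ (2 * j + 1)) ^ 2 * (1 - w ^ (2 * (j + 1))) =
      ∑ᶠ m, qPochhammer (w ^ 2) N * thetaCoeff w N m := by
  rw [prod_mul_distrib, prod_one_add_sq_eq_finsum_thetaCoeff hw0 hw, mul_comm, mul_finsum]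
  simp only [qPochhammer, ← pow_mul]

open Filter Topology

section Complex

variable {q : ℂ}

lemma pow_succ_ne_one_of_norm_lt_one (hq : ‖q‖ < 1) (k : ℕ) : q ^ (k + 1) ≠ 1 :=
  ne_of_apply_ne norm <| by
    rw [norm_pow, norm_one]; exact (pow_lt_one₀ (norm_nonneg q) hq k.succ_ne_zero).ne

lemma tendsto_qPochhammer (hq : ‖q‖ < 1) :
    Tendsto (qPochhammer q) atTop (𝓝 (∏' n, (1 - q ^ (n + 1)))) :=
  (ModularForm.multipliable_one_sub_pow hq).tendsto_prod_tprod_nat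

lemma tprod_one_sub_pow_ne_zero (hq : ‖q‖ < 1) : ∏' n, (1 - q ^ (n + 1)) ≠ 0 := by
  simp only [sub_eq_add_neg]
  refine tprod_one_add_ne_zero_of_summable (fun n => ?_) ?_
  · rw [← sub_eq_add_neg]
    exact sub_ne_zero.2 (pow_succ_ne_one_of_norm_lt_one hq n).symm
  · simpa [norm_neg, norm_pow, summable_nat_add_iff] using
      summable_geometric_of_lt_one (norm_nonneg q) hq

lemma tendsto_qPochhammerInv_natCast_add (hq : ‖q‖ < 1) (m : ℤ) :
    Tendsto (fun N : ℕ => qPochhammerInv q (N + m)) atTop (𝓝 (∏' n, (1 - q ^ (n + 1)))⁻¹) := by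
  have hto : Tendsto (fun N : ℕ => ((N : ℤ) + m).toNat) atTop atTop :=
    tendsto_atTop_atTop.2 fun b => ⟨b + m.natAbs, fun N hN => by omega⟩
  refine (((tendsto_qPochhammer hq).inv₀ (tprod_one_sub_pow_ne_zero hq)).comp hto).congr' ?_
  filter_upwards [eventually_ge_atTop m.natAbs] with N hN
  rw [Function.comp_apply, ← qPochhammerInv_natCast, Int.toNat_of_nonneg (by omega)]

lemma exists_norm_qPochhammer_le (hq : ‖q‖ < 1) : ∃ M, ∀ n, ‖qPochhammer q n‖ ≤ M := by
  obtain ⟨M, hM⟩ := isBounded_iff_forall_norm_le.1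
    (Metric.isBounded_range_of_tendsto _ (tendsto_qPochhammer hq))
  exact ⟨M, fun n => hM _ ⟨n, rfl⟩⟩

lemma exists_norm_qPochhammerInv_le (hq : ‖q‖ < 1) : ∃ M, ∀ k, ‖qPochhammerInv q k‖ ≤ M := by
  obtain ⟨M, hM⟩ := isBounded_iff_forall_norm_le.1 (Metric.isBounded_range_of_tendsto _
    ((tendsto_qPochhammer hq).inv₀ (tprod_one_sub_pow_ne_zero hq)))
  refine ⟨M, fun k => ?_⟩
  rcases lt_or_ge k 0 with hk | hk
  · rw [qPochhammerInv_of_neg q hk, norm_zero]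
    exact (norm_nonneg _).trans (hM _ ⟨0, rfl⟩)
  · obtain ⟨n, rfl⟩ := Int.eq_ofNat_of_zero_le hk
    exact qPochhammerInv_natCast q n ▸ hM _ ⟨n, rfl⟩

end Complex

variable {w : ℂ}

lemma norm_pow_two_lt_one (hw : ‖w‖ < 1) : ‖w ^ 2‖ < 1 := by
  rw [norm_pow]; exact pow_lt_one₀ (norm_nonneg w) hw two_ne_zero

lemma summable_norm_zpow_sq (hw : ‖w‖ < 1) : Summable fun m : ℤ => ‖w ^ (m ^ 2)‖ := by
  have hnat : Summable fun n : ℕ => ‖w‖ ^ (n ^ 2) :=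
    (summable_geometric_of_lt_one (norm_nonneg w) hw).of_nonneg_of_le (fun n => by positivity)
      fun n => pow_le_pow_of_le_one (norm_nonneg w) hw.le (Nat.le_self_pow two_ne_zero n)
  refine summable_int_iff_summable_nat_and_neg.2 ⟨?_, ?_⟩ <;>
    simpa only [neg_sq, ← Nat.cast_pow, zpow_natCast, norm_pow] using hnat

lemma tendsto_qPochhammer_mul_thetaCoeff (hw : ‖w‖ < 1) (m : ℤ) :
    Tendsto (fun N => qPochhammer (w ^ 2) N * thetaCoeff w N m) atTop (𝓝 (w ^ (m ^ 2))) := by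
  have hq := norm_pow_two_lt_one hw
  have hP := tprod_one_sub_pow_ne_zero hq
  have hD := tendsto_qPochhammer hq
  have hD2 : Tendsto (fun N => qPochhammer (w ^ 2) (2 * N)) atTop _ :=
    hD.comp (tendsto_atTop_mono (fun N => by dsimp; omega) tendsto_id)
  have hlim := (((hD.mul (tendsto_const_nhds (x := w ^ (m ^ 2)))).mul hD2).mul
    (tendsto_qPochhammerInv_natCast_add hq m)).mul (tendsto_qPochhammerInv_natCast_add hq (-m))
  rw [mul_comm _ (w ^ (m ^ 2)), mul_assoc, mul_assoc, mul_assoc, mul_inv_cancel_left₀ hP,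
    mul_inv_cancel₀ hP, mul_one] at hlim
  convert hlim using 2 with N
  simp only [thetaCoeff, sub_eq_add_neg]
  ring

lemma norm_qPochhammer_mul_thetaCoeff_le {M : ℝ} (hD : ∀ n, ‖qPochhammer (w ^ 2) n‖ ≤ M)
    (hI : ∀ k, ‖qPochhammerInv (w ^ 2) k‖ ≤ M) (N : ℕ) (m : ℤ) :
    ‖qPochhammer (w ^ 2) N * thetaCoeff w N m‖ ≤ M ^ 4 * ‖w ^ (m ^ 2)‖ := by
  have hM : 0 ≤ M := (norm_nonneg _).trans (hD 0)
  simp only [thetaCoeff, norm_mul]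
  calc _ ≤ M * (‖w ^ (m ^ 2)‖ * M * M * M) := by gcongr <;> simp only [hD, hI]
    _ = _ := by ring

lemma tendsto_tsum_qPochhammer_mul_thetaCoeff (hw : ‖w‖ < 1) :
    Tendsto (fun N => ∑' m, qPochhammer (w ^ 2) N * thetaCoeff w N m) atTop
      (𝓝 (∑' m : ℤ, w ^ (m ^ 2))) := by
  have hq := norm_pow_two_lt_one hw
  obtain ⟨M₁, hM₁⟩ := exists_norm_qPochhammer_le hq
  obtain ⟨M₂, hM₂⟩ := exists_norm_qPochhammerInv_le hq
  exact tendsto_tsum_of_dominated_convergence ((summable_norm_zpow_sq hw).mul_left (max M₁ M₂ ^ 4))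
    (tendsto_qPochhammer_mul_thetaCoeff hw) (Eventually.of_forall
      (norm_qPochhammer_mul_thetaCoeff_le (fun n => (hM₁ n).trans (le_max_left _ _))
        (fun k => (hM₂ k).trans (le_max_right _ _))))

lemma multipliable_one_add_sq_mul_one_sub (hw : ‖w‖ < 1) :
    Multipliable fun j : ℕ => (1 + w ^ (2 * j + 1)) ^ 2 * (1 - w ^ (2 * (j + 1))) := by
  have hq := norm_pow_two_lt_one hw
  have hodd : Summable fun j : ℕ => ‖w ^ (2 * j + 1)‖ := by
    refine ((summable_geometric_of_lt_one (norm_nonneg _) hq).mul_right ‖w‖).congr fun j => ?_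
    simp only [norm_pow]
    ring
  simpa only [pow_mul] using
    ((multipliable_one_add_of_summable hodd).pow 2).mul (ModularForm.multipliable_one_sub_pow hq)

end ThetaProduct

open ThetaProduct

/-- Jacobi triple product specialization `θ₃`: writing the nome as `q = w²` (so that
`q^{1/2} = w`), one has `∏_{j≥1} (1+q^{j−1/2})² (1−q^j) = Σ_{n∈ℤ} q^{n²/2}`, i.e.
`∏_{j≥1} (1+w^{2j−1})² (1−w^{2j}) = Σ_{n∈ℤ} w^{n²}` for `|w| < 1`. -/
theorem stmt_12 (w : ℂ) (hw : ‖w‖ < 1) :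
    (∏' j : ℕ, (1 + w ^ (2 * j + 1)) ^ 2 * (1 - w ^ (2 * (j + 1))))
      = ∑' n : ℤ, w ^ (n ^ 2) := by
  rcases eq_or_ne w 0 with rfl | hw0
  · rw [tsum_eq_single 0 fun n hn => zero_zpow _ (pow_ne_zero 2 hn)]
    simp
  have hq := norm_pow_two_lt_one hw
  refine tendsto_nhds_unique (multipliable_one_add_sq_mul_one_sub hw).tendsto_prod_tprod_nat
    ((tendsto_tsum_qPochhammer_mul_thetaCoeff hw).congr fun N => ?_)
  rw [prod_range_eq_finsum_qPochhammer_mul_thetaCoeff hw0 (pow_succ_ne_one_of_norm_lt_one hq)]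
  exact tsum_eq_finsum ((hasFiniteSupport_thetaCoeff w N).mul_right fun _ => _)
end

section
/- Let λ : I → ℝ_{≥0} with Σ_{i∈I} λ_i² = 1 (I finite), and define the tripartite pure state |Ψ⟩ = Σ_{i,j} λ_i λ_j |i⟩_A ⊗ (|i⟩ ⊗ |j⟩)_B ⊗ |j⟩_C on H_A ⊗ (H_{B_L} ⊗ H_{B_R}) ⊗ H_C, with orthonormal families. Then E_{A:BC}(|Ψ⟩⟨Ψ|) = E_{A:B}(Tr_C |Ψ⟩⟨Ψ|) = 2 log Σ_i λ_i. -/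
open Matrix Finset Polynomial
open scoped Kronecker

theorem Matrix.IsHermitian.trace_pow {𝕜 n : Type*} [RCLike 𝕜] [Fintype n] [DecidableEq n]
    {M : Matrix n n 𝕜} (hM : M.IsHermitian) (k : ℕ) :
    (M ^ k).trace = ∑ i, (hM.eigenvalues i : 𝕜) ^ k := by
  conv_lhs => rw [hM.spectral_theorem, ← map_pow, Unitary.conjStarAlgAut_apply, trace_mul_cycle,
    Unitary.coe_star_mul_self, one_mul, diagonal_pow, trace_diagonal]
  rfl

theorem sum_comp_eq_of_sum_pow_succ_eq {F m κ : Type*} [Field F] [Fintype m] [Fintype κ]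
    {d : m → F} {t : κ → F} (h : ∀ k : ℕ, ∑ i, d i ^ (k + 1) = ∑ j, t j ^ (k + 1))
    (f : F → F) (hf : f 0 = 0) : ∑ i, f (d i) = ∑ j, f (t j) := by
  classical
  have hpoly : ∀ Q : F[X], Q.eval 0 = 0 → ∑ i, Q.eval (d i) = ∑ j, Q.eval (t j) := by
    intro Q hQ
    have hc : Q.coeff 0 = 0 := by rwa [coeff_zero_eq_eval_zero]
    simp only [eval_eq_sum_range, sum_comm (s := univ), ← mul_sum]
    refine sum_congr rfl fun k _ => ?_
    cases k with
    | zero => simp [hc]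
    | succ k => rw [h k]
  set S : Finset F := insert 0 (univ.image d ∪ univ.image t)
  have hQ : ∀ x ∈ S, (Lagrange.interpolate S id f).eval x = f x := fun x hx =>
    Lagrange.eval_interpolate_at_node f Function.injective_id.injOn hx
  have hd : ∀ i, d i ∈ S := fun i => by simp [S]
  have ht : ∀ j, t j ∈ S := fun j => by simp [S]
  calc ∑ i, f (d i) = ∑ i, (Lagrange.interpolate S id f).eval (d i) := by simp only [hQ _ (hd _)]
    _ = ∑ j, (Lagrange.interpolate S id f).eval (t j) := hpoly _ (by rw [hQ 0 (by simp [S]), hf])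
    _ = ∑ j, f (t j) := by simp only [hQ _ (ht _)]

theorem trace_pow_succ_mul_mul_of_mul_eq_one {R m κ : Type*} [CommRing R] [Fintype m]
    [DecidableEq m] [Fintype κ] [DecidableEq κ] {V : Matrix m κ R} {W : Matrix κ m R}
    (hWV : W * V = 1) (D : Matrix κ κ R) (k : ℕ) :
    ((V * D * W) ^ (k + 1)).trace = (D ^ (k + 1)).trace := by
  have hpow : (V * D * W) ^ (k + 1) = V * D ^ (k + 1) * W := by
    induction k with
    | zero => simp
    | succ k ih =>
      rw [pow_succ, ih, pow_succ D (k + 1)]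
      simp only [Matrix.mul_assoc]
      rw [← Matrix.mul_assoc W V, hWV, Matrix.one_mul]
  rw [hpow, Matrix.mul_assoc, trace_mul_comm, Matrix.mul_assoc, hWV, Matrix.mul_one]

theorem mul_diagonal_mul_conjTranspose_apply {R m n κ : Type*} [CommSemiring R] [StarRing R]
    [Fintype κ] [DecidableEq κ] (U : Matrix m κ R) (d : κ → R) (V : Matrix n κ R) (p : m) (q : n) :
    (U * diagonal d * Vᴴ) p q = ∑ k, U p k * d k * star (V q k) := by
  simp only [mul_apply (M := U * diagonal d), mul_diagonal, conjTranspose_apply]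

/-- The nonzero singular values of `X`, with multiplicity, are the nonzero `s k`. -/
def HasSingularValues {m κ : Type*} [Fintype m] [Fintype κ] [DecidableEq κ]
    (X : Matrix m m ℂ) (s : κ → ℝ) : Prop :=
  0 ≤ s ∧ ∃ U V : Matrix m κ ℂ, Uᴴ * U = 1 ∧ Vᴴ * V = 1 ∧
    X = U * diagonal (fun k => (s k : ℂ)) * Vᴴ

namespace HasSingularValues

variable {m n κ κ' : Type*} [Fintype m] [Fintype n] [Fintype κ] [DecidableEq κ] [Fintype κ']
  [DecidableEq κ']

theorem traceNorm_eq [DecidableEq m] {X : Matrix m m ℂ} {s : κ → ℝ} (h : HasSingularValues X s) :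
    traceNorm X = ∑ k, s k := by
  obtain ⟨hs, U, V, hU, hV, rfl⟩ := h
  set X := U * diagonal (fun k => (s k : ℂ)) * Vᴴ
  have hXX : Xᴴ * X = V * diagonal (fun k => ((s k ^ 2 : ℝ) : ℂ)) * Vᴴ := by
    simp only [X, conjTranspose_mul, conjTranspose_conjTranspose, diagonal_conjTranspose]
    rw [show star (fun k => (s k : ℂ)) = fun k => (s k : ℂ) by ext; simp]
    simp only [Matrix.mul_assoc]
    rw [← Matrix.mul_assoc Uᴴ U, hU, Matrix.one_mul, ← Matrix.mul_assoc (diagonal _),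
      diagonal_mul_diagonal]
    simp [sq]
  have hXX_pow : ∀ k : ℕ, ((Xᴴ * X) ^ (k + 1)).trace = ((∑ j, (s j ^ 2) ^ (k + 1) : ℝ) : ℂ) := by
    intro k
    rw [hXX, trace_pow_succ_mul_mul_of_mul_eq_one hV, diagonal_pow, trace_diagonal]
    simp
  have hmoments : ∀ k : ℕ, ∑ i, (isHermitian_conjTranspose_mul_self X).eigenvalues i ^ (k + 1)
      = ∑ j, (s j ^ 2) ^ (k + 1) := fun k => by
    have h := ((isHermitian_conjTranspose_mul_self X).trace_pow (k + 1)).symm.trans (hXX_pow k)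
    apply Complex.ofReal_injective
    push_cast at h ⊢
    exact h
  calc traceNorm X = ∑ j, Real.sqrt (s j ^ 2) :=
        sum_comp_eq_of_sum_pow_succ_eq hmoments Real.sqrt Real.sqrt_zero
    _ = ∑ j, s j := by simp only [Real.sqrt_sq (hs _)]

theorem kronecker {X : Matrix m m ℂ} {Y : Matrix n n ℂ} {s : κ → ℝ} {t : κ' → ℝ}
    (hX : HasSingularValues X s) (hY : HasSingularValues Y t) :
    HasSingularValues (X ⊗ₖ Y) (fun k : κ × κ' => s k.1 * t k.2) := by
  obtain ⟨hs, U, V, hU, hV, rfl⟩ := hX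
  obtain ⟨ht, U', V', hU', hV', rfl⟩ := hY
  refine ⟨fun k => mul_nonneg (hs _) (ht _), U ⊗ₖ U', V ⊗ₖ V', ?_, ?_, ?_⟩
  · rw [conjTranspose_kronecker, ← mul_kronecker_mul, hU, hU', one_kronecker_one]
  · rw [conjTranspose_kronecker, ← mul_kronecker_mul, hV, hV', one_kronecker_one]
  · rw [mul_kronecker_mul, mul_kronecker_mul, diagonal_kronecker_diagonal, conjTranspose_kronecker]
    push_cast
    rfl

theorem reindex {X : Matrix m m ℂ} {s : κ → ℝ} (h : HasSingularValues X s) (e : m ≃ n) :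
    HasSingularValues (Matrix.reindex e e X) s := by
  obtain ⟨hs, U, V, hU, hV, rfl⟩ := h
  refine ⟨hs, U.submatrix e.symm id, V.submatrix e.symm id, ?_, ?_, ?_⟩
  · rw [conjTranspose_submatrix, submatrix_mul_equiv, hU, submatrix_id_id]
  · rw [conjTranspose_submatrix, submatrix_mul_equiv, hV, submatrix_id_id]
  · rw [reindex_apply, conjTranspose_submatrix, submatrix_mul _ _ _ id _ Function.bijective_id,
      submatrix_mul _ _ _ id _ Function.bijective_id, submatrix_id_id]

end HasSingularValues

theorem conjTranspose_transpose_mul_transpose_of_orthonormal {ι n : Type*} [Fintype n]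
    [DecidableEq ι] {e : ι → n → ℂ}
    (he : ∀ i j, (∑ p, star (e i p) * e j p) = if i = j then 1 else 0) :
    (of e)ᵀᴴ * (of e)ᵀ = 1 := by
  ext i j
  simpa [mul_apply, one_apply] using he i j

section Schmidt

variable {α β γ ι : Type*} [Fintype α] [Fintype γ] [Fintype ι] [DecidableEq ι]

def schmidtVec (lam : ι → ℝ) (E : Matrix α ι ℂ) (F : Matrix β ι ℂ) : α × β → ℂ :=
  fun p => ∑ i, (lam i : ℂ) * E p.1 i * F p.2 i

theorem hasSingularValues_ptA_schmidtVec [Fintype β] {lam : ι → ℝ} (hlam : 0 ≤ lam)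
    {E : Matrix α ι ℂ} {F : Matrix β ι ℂ} (hE : Eᴴ * E = 1) (hF : Fᴴ * F = 1) :
    HasSingularValues (ptA (vecMulVec (schmidtVec lam E F) (star (schmidtVec lam E F))))
      (fun k : ι × ι => lam k.1 * lam k.2) := by
  set W := E.map star ⊗ₖ F
  have hE' : (E.map star)ᴴ * E.map star = 1 := by
    rw [← transpose_conjTranspose, conjTranspose_conjTranspose, transpose_conjTranspose,
      ← conjTranspose_transpose, ← transpose_mul, hE, transpose_one]
  have hW : Wᴴ * W = 1 := by
    rw [conjTranspose_kronecker, ← mul_kronecker_mul, hE', hF, one_kronecker_one]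
  refine ⟨fun k => mul_nonneg (hlam _) (hlam _), W.submatrix id (Equiv.prodComm ι ι), W, ?_, hW, ?_⟩
  · rw [conjTranspose_submatrix, ← submatrix_mul _ _ _ id _ Function.bijective_id, hW,
      submatrix_one_equiv]
  · ext ⟨a, b⟩ ⟨a', b'⟩
    simp only [ptA, of_apply, vecMulVec_apply, Pi.star_apply, schmidtVec, star_sum, star_mul',
      sum_mul_sum, mul_diagonal_mul_conjTranspose_apply, submatrix_apply, W,
      kroneckerMap_apply, map_apply, Fintype.sum_prod_type, Equiv.prodComm_apply, Prod.fst_swap,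
      Prod.snd_swap, id, Complex.conj_conj, Complex.star_def, Complex.conj_ofReal]
    refine sum_congr rfl fun i _ => sum_congr rfl fun j _ => ?_
    push_cast
    ring

theorem partialTrace_schmidtVec {lam : ι → ℝ} {G : Matrix β ι ℂ} {H : Matrix γ ι ℂ}
    (hH : Hᴴ * H = 1) :
    of (fun b b' => ∑ c, schmidtVec lam G H (b, c) * star (schmidtVec lam G H (b', c)))
      = G * diagonal (fun i => ((lam i ^ 2 : ℝ) : ℂ)) * Gᴴ := by
  set Φ : Matrix β γ ℂ := of fun b c => schmidtVec lam G H (b, c)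
  have hΦ : Φ = G * diagonal (fun i => (lam i : ℂ)) * Hᵀ := by
    ext b c
    rw [mul_apply]
    simp only [Φ, of_apply, schmidtVec, mul_diagonal, transpose_apply]
    exact sum_congr rfl fun i _ => by ring
  have hHt : Hᵀ * Hᵀᴴ = 1 := by
    rw [transpose_conjTranspose, ← conjTranspose_transpose, ← transpose_mul, hH, transpose_one]
  calc _ = Φ * Φᴴ := by ext b b'; simp [Φ, mul_apply]
    _ = G * diagonal (fun i => ((lam i ^ 2 : ℝ) : ℂ)) * Gᴴ := by
      rw [hΦ, conjTranspose_mul, conjTranspose_mul, diagonal_conjTranspose]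
      simp only [Matrix.mul_assoc]
      rw [← Matrix.mul_assoc Hᵀ, hHt, Matrix.one_mul, ← Matrix.mul_assoc (diagonal _),
        diagonal_mul_diagonal]
      congr 3
      ext i
      simp [sq]

theorem dotProduct_star_schmidtVec [Fintype β] {lam : ι → ℝ} {G : Matrix β ι ℂ} {H : Matrix γ ι ℂ}
    (hG : Gᴴ * G = 1) (hH : Hᴴ * H = 1) :
    star (schmidtVec lam G H) ⬝ᵥ schmidtVec lam G H = ∑ i, ((lam i ^ 2 : ℝ) : ℂ) := by
  have h := congrArg trace (partialTrace_schmidtVec (lam := lam) (G := G) hH)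
  rw [Matrix.mul_assoc, trace_mul_comm, Matrix.mul_assoc, hG, Matrix.mul_one,
    trace_diagonal] at h
  rw [← h]
  simp [dotProduct, trace, Fintype.sum_prod_type, mul_comm]

theorem hasSingularValues_vecMulVec_self {φ : α → ℂ} (hφ : star φ ⬝ᵥ φ = 1) :
    HasSingularValues (vecMulVec φ (star φ)) (fun _ : Unit => 1) := by
  have hcol : (replicateCol Unit φ)ᴴ * replicateCol Unit φ = 1 := by
    ext
    simpa [mul_apply, dotProduct, mul_comm] using hφ
  refine ⟨fun _ => zero_le_one, replicateCol Unit φ, replicateCol Unit φ, hcol, hcol, ?_⟩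
  ext p q
  rw [mul_diagonal_mul_conjTranspose_apply]
  simp [vecMulVec_apply]

theorem hasSingularValues_ptA_of_apply_eq_mul [Fintype β] {δ κ κ' : Type*} [Fintype δ] [Fintype κ]
    [DecidableEq κ] [Fintype κ'] [DecidableEq κ'] {X : Matrix (α × β) (α × β) ℂ}
    {K : Matrix γ γ ℂ} {Y : Matrix (α × δ) (α × δ) ℂ} {s : κ → ℝ} {t : κ' → ℝ} (e : δ ≃ β × γ)
    (hY : ∀ a d a' d', Y (a, d) (a', d') = X (a, (e d).1) (a', (e d').1) * K (e d).2 (e d').2)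
    (hX : HasSingularValues (ptA X) s) (hK : HasSingularValues K t) :
    HasSingularValues (ptA Y) (fun k : κ × κ' => s k.1 * t k.2) := by
  set σ := (Equiv.prodAssoc α β γ).trans ((Equiv.refl α).prodCongr e.symm)
  have h : ptA Y = reindex σ σ (ptA X ⊗ₖ K) := by
    ext ⟨a, d⟩ ⟨a', d'⟩
    simp [ptA, hY, σ]
  rw [h]
  exact (hX.kronecker hK).reindex σ

end Schmidt

/-- For the fixed-sector state `|Ψ⟩ = Σ_{i,j} λ_i λ_j |i⟩_A (|i⟩⊗|j⟩)_B |j⟩_C`,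
one has `E_{A:BC} = E_{A:B}(Tr_C ρ) = 2 log Σ_i λ_i`. -/
theorem stmt_16 {ι A BL BR C : Type*} [Fintype ι] [DecidableEq ι]
    [Fintype A] [Fintype BL] [Fintype BR] [Fintype C]
    [DecidableEq A] [DecidableEq BL] [DecidableEq BR] [DecidableEq C]
    (lam : ι → ℝ) (hlam : ∀ i, 0 ≤ lam i) (hnorm : ∑ i, (lam i) ^ 2 = 1)
    (eA : ι → A → ℂ) (eBL : ι → BL → ℂ) (eBR : ι → BR → ℂ) (eC : ι → C → ℂ)
    (hA : ∀ i j, (∑ p, star (eA i p) * eA j p) = if i = j then 1 else 0)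
    (hBL : ∀ i j, (∑ p, star (eBL i p) * eBL j p) = if i = j then 1 else 0)
    (hBR : ∀ i j, (∑ p, star (eBR i p) * eBR j p) = if i = j then 1 else 0)
    (hC : ∀ i j, (∑ p, star (eC i p) * eC j p) = if i = j then 1 else 0)
    (Ψ : A × (BL × BR) × C → ℂ)
    (hΨ : ∀ a bl br c, Ψ (a, (bl, br), c)
      = ∑ i, ∑ j, (lam i : ℂ) * (lam j : ℂ) * eA i a * eBL i bl * eBR j br * eC j c)
    (ρ : Matrix (A × (BL × BR) × C) (A × (BL × BR) × C) ℂ)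
    (hρ : ∀ p q, ρ p q = Ψ p * star (Ψ q)) :
    negE ρ = negE (traceOutC ρ) ∧ negE ρ = 2 * Real.log (∑ i, lam i) := by
  set χ := schmidtVec lam (of eA)ᵀ (of eBL)ᵀ
  set φ := schmidtVec lam (of eBR)ᵀ (of eC)ᵀ
  have hΨχφ : ∀ a bl br c, Ψ (a, (bl, br), c) = χ (a, bl) * φ (br, c) := by
    intro a bl br c
    simp only [hΨ, χ, φ, schmidtVec, sum_mul_sum, of_apply, transpose_apply]
    exact sum_congr rfl fun i _ => sum_congr rfl fun j _ => by ring
  have hBR' := conjTranspose_transpose_mul_transpose_of_orthonormal hBR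
  have hC' := conjTranspose_transpose_mul_transpose_of_orthonormal hC
  have hφ : star φ ⬝ᵥ φ = 1 := by
    rw [dotProduct_star_schmidtVec hBR' hC']
    exact_mod_cast hnorm
  have hχ := hasSingularValues_ptA_schmidtVec hlam
    (conjTranspose_transpose_mul_transpose_of_orthonormal hA)
    (conjTranspose_transpose_mul_transpose_of_orthonormal hBL)
  have hABC := hasSingularValues_ptA_of_apply_eq_mul (Y := ρ) (Equiv.prodAssoc BL BR C)
    (fun a ⟨⟨bl, br⟩, c⟩ a' ⟨⟨bl', br'⟩, c'⟩ => by
      simp only [hρ, hΨχφ, vecMulVec_apply, Pi.star_apply, star_mul', Equiv.prodAssoc_apply]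
      ring)
    hχ (hasSingularValues_vecMulVec_self hφ)
  have hAB := hasSingularValues_ptA_of_apply_eq_mul (Y := traceOutC ρ) (Equiv.refl (BL × BR))
    (fun a ⟨bl, br⟩ a' ⟨bl', br'⟩ => by
      simp only [traceOutC, of_apply, hρ, hΨχφ, vecMulVec_apply, Pi.star_apply, star_mul',
        Equiv.refl_apply, mul_sum]
      exact sum_congr rfl fun c _ => by ring)
    hχ ⟨fun i => sq_nonneg (lam i), _, _, hBR', hBR', partialTrace_schmidtVec hC'⟩
  simp only [negE, hABC.traceNorm_eq, hAB.traceNorm_eq, Fintype.sum_prod_type, ← mul_sum,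
    ← sum_mul, hnorm, Fintype.sum_unique, mul_one, ← sq, Real.log_pow, Nat.cast_ofNat, and_self]
end

section
/- Let A and B be nonempty disjoint finite sets of qubit sites and let |Φ⟩ = 2^{-(|A∪B|-1)/2} Σ_{γ ∈ {0,1}^{A∪B}, Σγ odd} |γ⟩. Then for any site s ∈ A∪B, the single-site reduced density matrix is I/2, and |Φ⟩ cannot be written as |φ_A⟩ ⊗ |φ_B⟩ for any states |φ_A⟩ on the A sites and |φ_B⟩ on the B sites. -/
/-!
Two configurations that differ only at the site `s` have different parities, so the reduced
state at `s` is diagonal; its entry at `g` counts the `2 ^ (n - 2)` configurations of the other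
`n - 1` sites of parity `t - g`, each with weight `2 ^ -(n - 1)`. A product amplitude has
rectangular support: if it is nonzero at `γ₁` and at `γ₂`, it is nonzero at every configuration
agreeing with `γ₁` on `A` and with `γ₂` on `B`. Flipping one spin in `B` of a parity-`t`
configuration changes its parity but not its restriction to `A`, so the support of `|Φ⟩` is
not rectangular.
-/

/-- Extend a single-site configuration `g` at site `s` by a configuration `β` of the
remaining sites. -/
def extCfg {V : Type*} [DecidableEq V] (s : V) (g : ZMod 2)
    (β : {i : V // i ≠ s} → ZMod 2) : V → ZMod 2 :=
  fun i => if h : i = s then g else β ⟨i, h⟩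

open Finset

theorem card_filter_sum_eq (ι M : Type*) [Fintype ι] [Nonempty ι] [DecidableEq ι]
    [AddCommGroup M] [Fintype M] [DecidableEq M] (t : M) :
    #{f : ι → M | ∑ i, f i = t} = Fintype.card M ^ (Fintype.card ι - 1) := by
  let σ : (ι → M) →+ M := ∑ i, Pi.evalAddMonoidHom (fun _ => M) i
  have hσ (f : ι → M) : σ f = ∑ i, f i := by simp [σ]
  have hsurj (u : M) : u ∈ Set.range σ :=
    ⟨Pi.single (Classical.arbitrary ι) u, by simp [hσ]⟩
  have hfib (u : M) : #{f | σ f = u} = #{f | σ f = t} :=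
    AddMonoidHom.card_fiber_eq_of_mem_range σ (hsurj u) (hsurj t)
  have htotal : Fintype.card M ^ Fintype.card ι = Fintype.card M * #{f | σ f = t} := by
    rw [← Fintype.card_fun, ← card_univ, card_eq_sum_card_fiberwise (f := σ) (t := univ)
      (fun _ _ => mem_univ _)]
    simp [hfib]
  simp only [← hσ]
  have hM : 0 < Fintype.card M := Fintype.card_pos
  have hι : Fintype.card ι = Fintype.card ι - 1 + 1 := by
    have := Fintype.card_pos (α := ι); omega
  rw [hι, pow_succ'] at htotal
  exact (Nat.eq_of_mul_eq_mul_left hM htotal).symm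

def IsProductState {V α M : Type*} [Mul M] (A B : Finset V) (ψ : (V → α) → M) : Prop :=
  ∃ (φA : ({i : V // i ∈ A} → α) → M) (φB : ({i : V // i ∈ B} → α) → M),
    ∀ γ : V → α, ψ γ = φA (fun i => γ i.1) * φB (fun i => γ i.1)

theorem IsProductState.ne_zero_of_eqOn {V α M : Type*} [MulZeroClass M] [NoZeroDivisors M]
    {A B : Finset V} {ψ : (V → α) → M} (hψ : IsProductState A B ψ) {γ₁ γ₂ γ : V → α}
    (h₁ : ψ γ₁ ≠ 0) (h₂ : ψ γ₂ ≠ 0) (hA : ∀ i ∈ A, γ i = γ₁ i) (hB : ∀ i ∈ B, γ i = γ₂ i) :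
    ψ γ ≠ 0 := by
  obtain ⟨φA, φB, hφ⟩ := hψ
  rw [hφ] at h₁ h₂ ⊢
  rw [show (fun i : {i // i ∈ A} => γ i.1) = fun i => γ₁ i.1 from funext fun i => hA i i.2,
    show (fun i : {i // i ∈ B} => γ i.1) = fun i => γ₂ i.1 from funext fun i => hB i i.2]
  exact mul_ne_zero (left_ne_zero_of_mul h₁) (right_ne_zero_of_mul h₂)

noncomputable def paritySuperposition (V : Type*) [Fintype V] (t : ZMod 2) :
    (V → ZMod 2) → ℂ :=
  fun γ => if ∑ i, γ i = t then ((Real.sqrt (2 ^ (Fintype.card V - 1)))⁻¹ : ℂ) else 0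

section

variable {V : Type*} [Fintype V]

def siteReducedDensity [DecidableEq V] (ψ : (V → ZMod 2) → ℂ) (s : V) :
    Matrix (ZMod 2) (ZMod 2) ℂ :=
  Matrix.of fun g g' =>
    ∑ β : {i : V // i ≠ s} → ZMod 2, ψ (extCfg s g β) * star (ψ (extCfg s g' β))

theorem sum_extCfg [DecidableEq V] (s : V) (g : ZMod 2) (β : {i : V // i ≠ s} → ZMod 2) :
    ∑ i, extCfg s g β i = g + ∑ i, β i := by
  rw [Fintype.sum_eq_add_sum_subtype_ne _ s]
  simp only [extCfg]
  exact congrArg _ (sum_congr rfl fun i _ => dif_neg i.2)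

theorem paritySuperposition_mul_star (t : ZMod 2) (γ γ' : V → ZMod 2) :
    paritySuperposition V t γ * star (paritySuperposition V t γ') =
      if ∑ i, γ i = t ∧ ∑ i, γ' i = t then ((2 : ℂ) ^ (Fintype.card V - 1))⁻¹ else 0 := by
  unfold paritySuperposition
  split_ifs <;> simp_all [← Complex.ofReal_mul, ← mul_inv]

theorem siteReducedDensity_paritySuperposition [DecidableEq V] [Nontrivial V]
    (t : ZMod 2) (s : V) :
    siteReducedDensity (paritySuperposition V t) s = (1 / 2 : ℂ) • 1 := by
  have hcard : Fintype.card {i : V // i ≠ s} = Fintype.card V - 1 := by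
    simp [Fintype.card_subtype_compl]
  have hn : 2 ≤ Fintype.card V := Fintype.one_lt_card
  have : Nonempty {i : V // i ≠ s} := let ⟨i, hi⟩ := exists_ne s; ⟨⟨i, hi⟩⟩
  ext g g'
  simp only [siteReducedDensity, Matrix.of_apply, paritySuperposition_mul_star, sum_extCfg,
    Matrix.smul_apply, Matrix.one_apply, smul_eq_mul]
  rcases eq_or_ne g g' with rfl | hgg
  · simp only [and_self, ← eq_sub_iff_add_eq', ← sum_filter, sum_const, card_filter_sum_eq,
      hcard, ZMod.card, nsmul_eq_mul, if_true]
    obtain ⟨k, hk⟩ : ∃ k, Fintype.card V - 1 = k + 1 := ⟨_, (Nat.sub_add_cancel (by omega)).symm⟩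
    rw [hk, Nat.add_sub_cancel, pow_succ]
    push_cast
    field_simp
  · rw [if_neg hgg, mul_zero]
    exact sum_eq_zero fun β _ => if_neg fun h => hgg (add_right_cancel (h.1.trans h.2.symm))

theorem paritySuperposition_ne_zero_iff (t : ZMod 2) (γ : V → ZMod 2) :
    paritySuperposition V t γ ≠ 0 ↔ ∑ i, γ i = t := by
  unfold paritySuperposition
  split_ifs with h <;> simp [h]

theorem not_isProductState_paritySuperposition [DecidableEq V] {A B : Finset V}
    (hA : A.Nonempty) (hB : B.Nonempty) (hAB : Disjoint A B) (t : ZMod 2) :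
    ¬ IsProductState A B (paritySuperposition V t) := by
  obtain ⟨a, ha⟩ := hA
  obtain ⟨b, hb⟩ := hB
  intro hψ
  refine (paritySuperposition_ne_zero_iff t _).not.mpr ?_ <| hψ.ne_zero_of_eqOn
    (γ₁ := Pi.single a t) (γ₂ := Pi.single a (t + 1) + Pi.single b 1)
    (γ := Pi.single a t + Pi.single b 1) ?_ ?_ ?_ ?_
  · simp [sum_add_distrib]
  · simp [paritySuperposition_ne_zero_iff]
  · simp [paritySuperposition_ne_zero_iff, sum_add_distrib, add_assoc, CharTwo.add_self_eq_zero]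
  · intro i hi
    simp [Pi.single_apply, (disjoint_iff_ne.mp hAB i hi b hb)]
  · intro i hi
    simp [Pi.single_apply, (disjoint_iff_ne.mp hAB a ha i hi).symm]

end

theorem stmt_19_general {V : Type*} [Fintype V] [DecidableEq V]
    (A B : Finset V) (hA : A.Nonempty) (hB : B.Nonempty)
    (hdisj : Disjoint A B)
    (Φ : (V → ZMod 2) → ℂ)
    (hΦ : ∀ γ, Φ γ = if (∑ i, γ i) = 1
      then ((Real.sqrt (2 ^ (Fintype.card V - 1)))⁻¹ : ℂ) else 0) :
    (∀ (s : V) (ρs : Matrix (ZMod 2) (ZMod 2) ℂ),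
      (∀ g g', ρs g g'
          = ∑ β : {i : V // i ≠ s} → ZMod 2,
              Φ (extCfg s g β) * star (Φ (extCfg s g' β))) →
      ρs = (1 / 2 : ℂ) • 1) ∧
    ¬ ∃ (φA : ({i : V // i ∈ A} → ZMod 2) → ℂ) (φB : ({i : V // i ∈ B} → ZMod 2) → ℂ),
      ∀ γ : V → ZMod 2,
        Φ γ = φA (fun i => γ i.1) * φB (fun i => γ i.1) := by
  obtain rfl : Φ = paritySuperposition V 1 := funext hΦ
  refine ⟨fun s ρs hρ => ?_, not_isProductState_paritySuperposition hA hB hdisj 1⟩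
  obtain ⟨a, ha⟩ := hA
  obtain ⟨b, hb⟩ := hB
  have : Nontrivial V := nontrivial_of_ne a b (disjoint_iff_ne.mp hdisj a ha b hb)
  rw [← siteReducedDensity_paritySuperposition 1 s]
  exact Matrix.ext hρ

/-- For the odd-parity uniform superposition `|Φ⟩` on the qubit sites `A ∪ B`
(`A`, `B` nonempty and disjoint), every single-site reduced density matrix is the
maximally mixed state `I/2`, and `|Φ⟩ is not a tensor product of a state on the `A`
sites with a state on the `B` sites. -/
theorem stmt_19 {V : Type*} [Fintype V] [DecidableEq V]
    (A B : Finset V) (hA : A.Nonempty) (hB : B.Nonempty)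
    (hdisj : Disjoint A B) (hcover : A ∪ B = Finset.univ)
    (Φ : (V → ZMod 2) → ℂ)
    (hΦ : ∀ γ, Φ γ = if (∑ i, γ i) = 1
      then ((Real.sqrt (2 ^ (Fintype.card V - 1)))⁻¹ : ℂ) else 0) :
    (∀ (s : V) (ρs : Matrix (ZMod 2) (ZMod 2) ℂ),
      (∀ g g', ρs g g'
          = ∑ β : {i : V // i ≠ s} → ZMod 2,
              Φ (extCfg s g β) * star (Φ (extCfg s g' β))) →
      ρs = (1 / 2 : ℂ) • 1) ∧
    ¬ ∃ (φA : ({i : V // i ∈ A} → ZMod 2) → ℂ) (φB : ({i : V // i ∈ B} → ZMod 2) → ℂ),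
      ∀ γ : V → ZMod 2,
        Φ γ = φA (fun i => γ i.1) * φB (fun i => γ i.1) :=
  stmt_19_general A B hA hB hdisj Φ hΦ
end
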